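/- arXiv:2502.20591 — 5 statements merged into one kernel-verified Lean document; each statement's English description precedes it below -/
import Mathlib

section
/- Let A and B be finite-dimensional unital C*-algebras over ℂ, and let γ be an encoding from the self-adjoint elements of A to the self-adjoint elements of B. Then γ is ℝ-linear: γ(a + b) = γ(a) + γ(b) and γ(r • a) = r • γ(a) for all self-adjoint a, b ∈ A and all r ∈ ℝ. -/
/-!
An encoding sends `0` to a self-adjoint element with spectrum contained in `{0}`, and in a
C⋆-algebra such an element is `0`. A map between vector spaces over an ordered field that
preserves convex combinations and fixes `0` is linear: it commutes with scaling by `[0, 1]`,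
hence (inverting) by all nonnegative scalars, additivity follows from `x + y = 2 • (½ x + ½ y)`,
and negative scalars from `f (-x) + f x = f 0 = 0`.
-/

open Set

lemma spectrum_zero_subset {𝕜 A : Type*} [Field 𝕜] [Ring A] [Algebra 𝕜 A] :
    spectrum 𝕜 (0 : A) ⊆ {0} := by
  rcases subsingleton_or_nontrivial A with _ | _
  · simp [spectrum.of_subsingleton]
  · exact (spectrum.zero_eq (𝕜 := 𝕜) (A := A)).subset

lemma IsSelfAdjoint.eq_zero_of_spectrum_subset_zero {B : Type*}
    [NormedRing B] [StarRing B] [CStarRing B] [NormedAlgebra ℂ B] [StarModule ℂ B]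
    [CompleteSpace B] {b : B} (hb : IsSelfAdjoint b) (hs : spectrum ℝ b ⊆ {0}) : b = 0 :=
  letI : CStarAlgebra B := {}
  CFC.eq_zero_of_spectrum_subset_zero b hs hb

def PreservesConvexCombinations (𝕜 : Type*) {E F : Type*} [Ring 𝕜] [PartialOrder 𝕜]
    [AddCommGroup E] [Module 𝕜 E] [AddCommGroup F] [Module 𝕜 F] (f : E → F) : Prop :=
  ∀ (x y : E) (l : 𝕜), l ∈ Icc 0 1 → f (l • x + (1 - l) • y) = l • f x + (1 - l) • f y

namespace PreservesConvexCombinations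

lemma map_smul_of_mem_Icc {𝕜 E F : Type*} [Ring 𝕜] [PartialOrder 𝕜]
    [AddCommGroup E] [Module 𝕜 E] [AddCommGroup F] [Module 𝕜 F] {f : E → F}
    (hf : PreservesConvexCombinations 𝕜 f) (h0 : f 0 = 0) {l : 𝕜} (hl : l ∈ Icc 0 1) (x : E) :
    f (l • x) = l • f x := by
  simpa [h0] using hf x 0 l hl

variable {𝕜 E F : Type*} [Field 𝕜] [LinearOrder 𝕜] [IsStrictOrderedRing 𝕜]
  [AddCommGroup E] [Module 𝕜 E] [AddCommGroup F] [Module 𝕜 F]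
  {f : E → F} (hf : PreservesConvexCombinations 𝕜 f) (h0 : f 0 = 0)
include hf h0

lemma map_smul_of_nonneg {r : 𝕜} (hr : 0 ≤ r) (x : E) : f (r • x) = r • f x := by
  rcases le_or_gt r 1 with hr1 | hr1
  · exact hf.map_smul_of_mem_Icc h0 ⟨hr, hr1⟩ x
  have hr0 : r ≠ 0 := (zero_lt_one.trans hr1).ne'
  have hinv : r⁻¹ ∈ Icc (0 : 𝕜) 1 := ⟨inv_nonneg.mpr hr, inv_le_one_of_one_le₀ hr1.le⟩
  have h := hf.map_smul_of_mem_Icc h0 hinv (r • x)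
  rw [smul_smul, inv_mul_cancel₀ hr0, one_smul] at h
  rw [h, smul_smul, mul_inv_cancel₀ hr0, one_smul]

lemma map_add (x y : E) : f (x + y) = f x + f y := by
  have hhalf : (2⁻¹ : 𝕜) ∈ Icc 0 1 := ⟨by positivity, inv_le_one_of_one_le₀ one_le_two⟩
  have hmid := hf x y 2⁻¹ hhalf
  rw [show (1 : 𝕜) - 2⁻¹ = 2⁻¹ by norm_num] at hmid
  calc f (x + y) = f ((2 : 𝕜) • ((2⁻¹ : 𝕜) • x + (2⁻¹ : 𝕜) • y)) := by
        rw [smul_add, smul_inv_smul₀ two_ne_zero, smul_inv_smul₀ two_ne_zero]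
    _ = (2 : 𝕜) • ((2⁻¹ : 𝕜) • f x + (2⁻¹ : 𝕜) • f y) := by
        rw [hf.map_smul_of_nonneg h0 zero_le_two, hmid]
    _ = f x + f y := by
        rw [smul_add, smul_inv_smul₀ two_ne_zero, smul_inv_smul₀ two_ne_zero]

lemma map_neg (x : E) : f (-x) = -f x :=
  eq_neg_of_add_eq_zero_left <| by rw [← hf.map_add h0, neg_add_cancel, h0]

lemma map_smul (r : 𝕜) (x : E) : f (r • x) = r • f x := by
  rcases le_or_gt 0 r with hr | hr
  · exact hf.map_smul_of_nonneg h0 hr x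
  · rw [← neg_smul_neg, hf.map_smul_of_nonneg h0 (neg_nonneg.mpr hr.le), hf.map_neg h0,
      neg_smul_neg]

end PreservesConvexCombinations

theorem encoding_is_real_linear_general
    {A B : Type*}
    [NormedRing A] [StarRing A] [NormedAlgebra ℂ A] [StarModule ℂ A]
    [NormedRing B] [StarRing B] [CStarRing B] [NormedAlgebra ℂ B] [StarModule ℂ B]
    [CompleteSpace B]
    (γ : selfAdjoint A → selfAdjoint B)
    (hspec : ∀ a : selfAdjoint A, spectrum ℝ ((γ a : B)) = spectrum ℝ ((a : A)))
    (hconv : ∀ (a b : selfAdjoint A) (l : ℝ), l ∈ Set.Icc (0 : ℝ) 1 →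
      γ (l • a + (1 - l) • b) = l • γ a + (1 - l) • γ b) :
    (∀ a b : selfAdjoint A, γ (a + b) = γ a + γ b) ∧
      (∀ (r : ℝ) (a : selfAdjoint A), γ (r • a) = r • γ a) := by
  have hγ : PreservesConvexCombinations ℝ γ := hconv
  have h0 : γ 0 = 0 := Subtype.ext <| (γ 0).prop.eq_zero_of_spectrum_subset_zero <| by
    rw [hspec]
    exact spectrum_zero_subset
  exact ⟨hγ.map_add h0, hγ.map_smul h0⟩

/-- An encoding (a spectrum-preserving, convex map) between the
self-adjoint parts of finite-dimensional unital C*-algebras is `ℝ`-linear. -/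
theorem encoding_is_real_linear
    {A B : Type*}
    [NormedRing A] [StarRing A] [CStarRing A] [NormedAlgebra ℂ A] [StarModule ℂ A]
    [CompleteSpace A] [FiniteDimensional ℂ A]
    [NormedRing B] [StarRing B] [CStarRing B] [NormedAlgebra ℂ B] [StarModule ℂ B]
    [CompleteSpace B] [FiniteDimensional ℂ B]
    (γ : selfAdjoint A → selfAdjoint B)
    (hspec : ∀ a : selfAdjoint A, spectrum ℝ ((γ a : B)) = spectrum ℝ ((a : A)))
    (hconv : ∀ (a b : selfAdjoint A) (l : ℝ), l ∈ Set.Icc (0 : ℝ) 1 →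
      γ (l • a + (1 - l) • b) = l • γ a + (1 - l) • γ b) :
    (∀ a b : selfAdjoint A, γ (a + b) = γ a + γ b) ∧
      (∀ (r : ℝ) (a : selfAdjoint A), γ (r • a) = r • γ a) :=
  encoding_is_real_linear_general γ hspec hconv
end

section
/- Let A and B be finite-dimensional unital C*-algebras over ℂ and let γ be an ℝ-linear, spectrum-preserving map from the self-adjoint elements of A to the self-adjoint elements of B. If p ∈ A is a self-adjoint idempotent (p² = p, p* = p), then γ(p) is also an idempotent: γ(p)² = γ(p). -/
theorem spectrum_preserving_map_preserves_idempotents_general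
    {A B : Type*}
    [NormedRing A] [StarRing A] [NormedAlgebra ℂ A]
    [NormedRing B] [StarRing B] [CStarRing B] [NormedAlgebra ℂ B] [StarModule ℂ B]
    [CompleteSpace B]
    (γ : selfAdjoint A → selfAdjoint B)
    (hspec : ∀ a : selfAdjoint A, spectrum ℝ ((γ a : B)) = spectrum ℝ ((a : A)))
    (p : selfAdjoint A) (hp : (p : A) * (p : A) = (p : A)) :
    (γ p : B) * (γ p : B) = (γ p : B) := by
  -- bundling the instances gives `B` its continuous functional calculus
  let : CStarAlgebra B := { }
  refine (isIdempotentElem_iff_spectrum_subset ℝ _ (γ p).prop).mpr ?_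
  rw [hspec p]
  exact IsIdempotentElem.spectrum_subset ℝ hp

/-- An `ℝ`-linear, spectrum-preserving map between the self-adjoint
parts of finite-dimensional unital C*-algebras sends self-adjoint idempotents to
idempotents. -/
theorem spectrum_preserving_map_preserves_idempotents
    {A B : Type*}
    [NormedRing A] [StarRing A] [CStarRing A] [NormedAlgebra ℂ A] [StarModule ℂ A]
    [CompleteSpace A] [FiniteDimensional ℂ A]
    [NormedRing B] [StarRing B] [CStarRing B] [NormedAlgebra ℂ B] [StarModule ℂ B]
    [CompleteSpace B] [FiniteDimensional ℂ B]
    (γ : selfAdjoint A → selfAdjoint B)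
    (hadd : ∀ a b : selfAdjoint A, γ (a + b) = γ a + γ b)
    (hsmul : ∀ (r : ℝ) (a : selfAdjoint A), γ (r • a) = r • γ a)
    (hspec : ∀ a : selfAdjoint A, spectrum ℝ ((γ a : B)) = spectrum ℝ ((a : A)))
    (p : selfAdjoint A) (hp : (p : A) * (p : A) = (p : A)) :
    (γ p : B) * (γ p : B) = (γ p : B) :=
  spectrum_preserving_map_preserves_idempotents_general γ hspec p hp
end

section
/- Let A and B be finite-dimensional unital C*-algebras over ℂ and let γ be an ℝ-linear, spectrum-preserving map from the self-adjoint elements of A to the self-adjoint elements of B. If p, q ∈ A are self-adjoint idempotents with p·q = 0, then γ(p)·γ(q) + γ(q)·γ(p) = 0 in B. -/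
/-! Idempotents of `A` have spectrum in `{0, 1}`, and by the continuous functional calculus a
self-adjoint element of `B` with spectrum in `{0, 1}` is idempotent; so `γ` maps self-adjoint
idempotents to idempotents. Two idempotents `e, f` have idempotent sum exactly when
`e * f + f * e = 0`. For orthogonal `p, q` this holds, so `p + q` is idempotent, hence so is
`γ (p + q) = γ p + γ q`, which forces `γ p` and `γ q` to anticommute. -/

lemma IsSelfAdjoint.mul_eq_zero_symm {R : Type*} [NonUnitalNonAssocSemiring R] [StarRing R]
    {a b : R} (ha : IsSelfAdjoint a) (hb : IsSelfAdjoint b) (h : a * b = 0) : b * a = 0 := by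
  simpa [ha.star_eq, hb.star_eq] using congrArg star h

lemma IsIdempotentElem.of_spectrum_eq {A B : Type*} [Ring A] [Algebra ℝ A]
    [Ring B] [StarRing B] [TopologicalSpace B] [Algebra ℝ B]
    [ContinuousFunctionalCalculus ℝ B IsSelfAdjoint] {a : A} {b : B}
    (ha : IsIdempotentElem a) (hb : IsSelfAdjoint b) (h : spectrum ℝ b = spectrum ℝ a) :
    IsIdempotentElem b :=
  (isIdempotentElem_iff_spectrum_subset ℝ b hb).2 (h ▸ ha.spectrum_subset ℝ)

theorem spectrum_preserving_map_orthogonal_idempotents_anticommute_general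
    {A B : Type*}
    [NormedRing A] [StarRing A] [NormedAlgebra ℂ A]
    [NormedRing B] [StarRing B] [CStarRing B] [NormedAlgebra ℂ B] [StarModule ℂ B]
    [CompleteSpace B]
    (γ : selfAdjoint A → selfAdjoint B)
    (hadd : ∀ a b : selfAdjoint A, γ (a + b) = γ a + γ b)
    (hspec : ∀ a : selfAdjoint A, spectrum ℝ ((γ a : B)) = spectrum ℝ ((a : A)))
    (p q : selfAdjoint A)
    (hp : (p : A) * (p : A) = (p : A)) (hq : (q : A) * (q : A) = (q : A))
    (hpq : (p : A) * (q : A) = 0) :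
    (γ p : B) * (γ q : B) + (γ q : B) * (γ p : B) = 0 := by
  let : CStarAlgebra B := {}
  have hqp : (q : A) * p = 0 := p.2.mul_eq_zero_symm q.2 hpq
  have hpq_idem : IsIdempotentElem ((p + q : selfAdjoint A) : A) :=
    (IsIdempotentElem.add_iff hp hq).2 (by rw [hpq, hqp, add_zero])
  have hγ : ∀ a : selfAdjoint A, IsIdempotentElem (a : A) → IsIdempotentElem (γ a : B) :=
    fun a ha => ha.of_spectrum_eq (γ a).2 (hspec a)
  have hγpq := hγ (p + q) hpq_idem
  rw [hadd] at hγpq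
  exact (IsIdempotentElem.add_iff (hγ p hp) (hγ q hq)).1 hγpq

/-- An `ℝ`-linear, spectrum-preserving map between the self-adjoint
parts of finite-dimensional unital C*-algebras sends orthogonal self-adjoint
idempotents to anticommuting elements. -/
theorem spectrum_preserving_map_orthogonal_idempotents_anticommute
    {A B : Type*}
    [NormedRing A] [StarRing A] [CStarRing A] [NormedAlgebra ℂ A] [StarModule ℂ A]
    [CompleteSpace A] [FiniteDimensional ℂ A]
    [NormedRing B] [StarRing B] [CStarRing B] [NormedAlgebra ℂ B] [StarModule ℂ B]
    [CompleteSpace B] [FiniteDimensional ℂ B]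
    (γ : selfAdjoint A → selfAdjoint B)
    (hadd : ∀ a b : selfAdjoint A, γ (a + b) = γ a + γ b)
    (hsmul : ∀ (r : ℝ) (a : selfAdjoint A), γ (r • a) = r • γ a)
    (hspec : ∀ a : selfAdjoint A, spectrum ℝ ((γ a : B)) = spectrum ℝ ((a : A)))
    (p q : selfAdjoint A)
    (hp : (p : A) * (p : A) = (p : A)) (hq : (q : A) * (q : A) = (q : A))
    (hpq : (p : A) * (q : A) = 0) :
    (γ p : B) * (γ q : B) + (γ q : B) * (γ p : B) = 0 :=
  spectrum_preserving_map_orthogonal_idempotents_anticommute_general γ hadd hspec p q hp hq hpq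
end

section
/- Let n, m ≥ 1 and let Γ : M_n(ℂ) → M_m(ℂ) be a unital real star ring homomorphism. Set u = Γ(i • 1) and e = (1/2) • (1 − i • u). Then e² = e, eᴴ = e, e · Γ(α) = Γ(α) · e for every α, and for all λ ∈ ℂ and all α ∈ M_n(ℂ): Γ(λ • α) · e = λ • (Γ(α) · e) and Γ(λ • α) · (1 − e) = (conj λ) • (Γ(α) · (1 − e)). In other words, Γ is ℂ-linear on the corner determined by e and conjugate-linear on the complementary corner. -/
open Matrix in
/-- A unital real star ring homomorphism between complex matrix algebras. -/
def IsUnitalRealStarRingHom {n m : ℕ}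
    (Γ : Matrix (Fin n) (Fin n) ℂ → Matrix (Fin m) (Fin m) ℂ) : Prop :=
  (∀ α β, Γ (α + β) = Γ α + Γ β) ∧
  (∀ α β, Γ (α * β) = Γ α * Γ β) ∧
  Γ 1 = 1 ∧
  (∀ (r : ℝ) (α), Γ (r • α) = r • Γ α) ∧
  (∀ α, Γ αᴴ = (Γ α)ᴴ)

/-!
Write `u = Γ(i • 1)`. Since `i • 1` is central with square `-1`, so is `u`, and ℝ-linearity gives
`Γ(λ • α) = Re λ • Γ α + Im λ • u Γ α`. The element `e = (1 - i u)/2` is the spectral projection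
of `u` for the eigenvalue `i` (and `1 - e` the one for `-i`), so multiplying by `e` turns `u` into
`i`, and multiplying by `1 - e` turns it into `-i`.
-/

open Complex

noncomputable def splittingIdempotent {B : Type*} [Ring B] [Algebra ℂ B] (u : B) : B :=
  ((1 : ℂ) / 2) • (1 - I • u)

section SplittingIdempotent

variable {B : Type*} [Ring B] [Algebra ℂ B] {u : B}

lemma one_sub_splittingIdempotent (u : B) :
    1 - splittingIdempotent u = ((1 : ℂ) / 2) • (1 + I • u) := by
  rw [splittingIdempotent]
  module

lemma mul_splittingIdempotent (hu : u * u = -1) :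
    u * splittingIdempotent u = I • splittingIdempotent u := by
  rw [splittingIdempotent, mul_smul_comm, mul_sub, mul_one, mul_smul_comm, hu]
  match_scalars
  · linear_combination (1 / 2 : ℂ) * I_mul_I
  · ring

lemma mul_one_sub_splittingIdempotent (hu : u * u = -1) :
    u * (1 - splittingIdempotent u) = (-I) • (1 - splittingIdempotent u) := by
  rw [one_sub_splittingIdempotent, mul_smul_comm, mul_add, mul_one, mul_smul_comm, hu]
  match_scalars
  · linear_combination (1 / 2 : ℂ) * I_mul_I
  · ring

lemma isIdempotentElem_splittingIdempotent (hu : u * u = -1) :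
    IsIdempotentElem (splittingIdempotent u) := by
  rw [IsIdempotentElem]
  nth_rw 1 [splittingIdempotent]
  rw [smul_mul_assoc, sub_mul, one_mul, smul_mul_assoc, mul_splittingIdempotent hu, smul_smul,
    I_mul_I]
  module

lemma Commute.splittingIdempotent_left {x : B} (h : Commute u x) :
    Commute (splittingIdempotent u) x :=
  ((Commute.one_left x).sub_left (h.smul_left I)).smul_left _

lemma IsSelfAdjoint.splittingIdempotent [StarRing B] [StarModule ℂ B] (hu : star u = -u) :
    IsSelfAdjoint (_root_.splittingIdempotent u) := by
  rw [IsSelfAdjoint, _root_.splittingIdempotent, star_smul, star_sub, star_one, star_smul, hu,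
    star_div₀, star_one, star_ofNat, Complex.star_def, conj_I, neg_smul_neg]

end SplittingIdempotent

section RealAlgHom

variable {A B : Type*} [Ring A] [Ring B] [Algebra ℂ A] [Algebra ℂ B] (Γ : A →ₐ[ℝ] B)

lemma map_I_smul (a : A) : Γ (I • a) = Γ (I • 1) * Γ a := by
  rw [← map_mul, smul_one_mul]

lemma commute_map_I_smul_one (a : A) : Commute (Γ (I • 1)) (Γ a) := by
  rw [Commute, SemiconjBy, ← map_mul, ← map_mul, smul_one_mul, mul_smul_one]

lemma map_I_smul_one_mul_self : Γ (I • 1) * Γ (I • 1) = -1 := by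
  rw [← map_I_smul, smul_smul, I_mul_I, neg_one_smul, map_neg, map_one]

lemma map_smul_mul_of_mul_eq_smul (l : ℂ) (a : A) {p : B} {z : ℂ}
    (hp : Γ (I • 1) * p = z • p) : Γ (l • a) * p = (l.re + l.im * z) • (Γ a * p) := by
  have hl : l • a = l.re • a + l.im • (I • a) := by
    rw [← algebraMap_smul ℂ l.re, ← algebraMap_smul ℂ l.im, smul_smul, ← add_smul]
    simp
  rw [hl, map_add, map_smul, map_smul, map_I_smul, add_mul, smul_mul_assoc, smul_mul_assoc,
    (commute_map_I_smul_one Γ a).eq, mul_assoc, hp, mul_smul_comm, ← algebraMap_smul ℂ l.re,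
    ← algebraMap_smul ℂ l.im, smul_smul, ← add_smul]
  simp

end RealAlgHom

lemma star_map_I_smul_one {A B : Type*} [Ring A] [Ring B] [Algebra ℂ A] [Algebra ℂ B]
    [StarRing A] [StarModule ℂ A] [StarRing B] (Γ : A →⋆ₐ[ℝ] B) :
    star (Γ (I • 1)) = -Γ (I • 1) := by
  rw [← map_star, star_smul, star_one, Complex.star_def, conj_I, neg_smul, map_neg]

open Matrix in
def IsUnitalRealStarRingHom.toStarAlgHom {n m : ℕ}
    {Γ : Matrix (Fin n) (Fin n) ℂ → Matrix (Fin m) (Fin m) ℂ} (hΓ : IsUnitalRealStarRingHom Γ) :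
    Matrix (Fin n) (Fin n) ℂ →⋆ₐ[ℝ] Matrix (Fin m) (Fin m) ℂ where
  toFun := Γ
  map_one' := hΓ.2.2.1
  map_mul' := hΓ.2.1
  map_zero' := by simpa using hΓ.1 0 0
  map_add' := hΓ.1
  commutes' r := by simp only [Algebra.algebraMap_eq_smul_one, hΓ.2.2.2.1, hΓ.2.2.1]
  map_star' := hΓ.2.2.2.2

open Matrix in
theorem splitting_projection_of_real_star_ring_hom_general
    (n m : ℕ)
    (Γ : Matrix (Fin n) (Fin n) ℂ → Matrix (Fin m) (Fin m) ℂ)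
    (hΓ : IsUnitalRealStarRingHom Γ) :
    letI u : Matrix (Fin m) (Fin m) ℂ := Γ (Complex.I • 1)
    letI e : Matrix (Fin m) (Fin m) ℂ := ((1 : ℂ) / 2) • (1 - Complex.I • u)
    e * e = e ∧
    eᴴ = e ∧
    (∀ α, e * Γ α = Γ α * e) ∧
    (∀ (l : ℂ) (α), Γ (l • α) * e = l • (Γ α * e)) ∧
    (∀ (l : ℂ) (α), Γ (l • α) * (1 - e) = (starRingEnd ℂ l) • (Γ α * (1 - e))) := by
  let Φ := hΓ.toStarAlgHom
  have hu : Γ (I • 1) * Γ (I • 1) = -1 := map_I_smul_one_mul_self Φ.toAlgHom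
  refine ⟨isIdempotentElem_splittingIdempotent hu,
    IsSelfAdjoint.splittingIdempotent (star_map_I_smul_one Φ),
    fun α ↦ (commute_map_I_smul_one Φ.toAlgHom α).splittingIdempotent_left.eq,
    fun l α ↦ ?_, fun l α ↦ ?_⟩
  · have h := map_smul_mul_of_mul_eq_smul Φ.toAlgHom l α (mul_splittingIdempotent hu)
    rwa [re_add_im] at h
  · have hconj : (l.re : ℂ) + l.im * -I = starRingEnd ℂ l := by
      apply Complex.ext <;> simp
    have h := map_smul_mul_of_mul_eq_smul Φ.toAlgHom l α (mul_one_sub_splittingIdempotent hu)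
    rwa [hconj] at h

open Matrix in
/-- the central projection `e = (1 - i·u)/2` built from `u = Γ(i•1)`
splits a unital real star ring homomorphism `Γ` into a `ℂ`-linear corner and a
conjugate-linear corner. -/
theorem splitting_projection_of_real_star_ring_hom
    (n m : ℕ) (hn : 1 ≤ n) (hm : 1 ≤ m)
    (Γ : Matrix (Fin n) (Fin n) ℂ → Matrix (Fin m) (Fin m) ℂ)
    (hΓ : IsUnitalRealStarRingHom Γ) :
    letI u : Matrix (Fin m) (Fin m) ℂ := Γ (Complex.I • 1)
    letI e : Matrix (Fin m) (Fin m) ℂ := ((1 : ℂ) / 2) • (1 - Complex.I • u)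
    e * e = e ∧
    eᴴ = e ∧
    (∀ α, e * Γ α = Γ α * e) ∧
    (∀ (l : ℂ) (α), Γ (l • α) * e = l • (Γ α * e)) ∧
    (∀ (l : ℂ) (α), Γ (l • α) * (1 - e) = (starRingEnd ℂ l) • (Γ α * (1 - e))) :=
  splitting_projection_of_real_star_ring_hom_general n m Γ hΓ
end

section
/- Let n, m ≥ 1 and let π : M_n(ℂ) → M_m(ℂ) be a unital ℂ-algebra homomorphism satisfying π(αᴴ) = π(α)ᴴ for all α (a unital *-homomorphism). Then n divides m and there exists a unitary U ∈ M_m(ℂ) such that for all α ∈ M_n(ℂ), π(α) = U · D(α) · Uᴴ, where D(α) ∈ M_m(ℂ) is the block-diagonal matrix consisting of m/n copies of α on the diagonal, regarded as an m×m matrix via an identification of Fin(m/n) × Fin(n) with Fin(m). -/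
/-!
The images `E i j = π (single i j 1)` form a system of matrix units in `M_m(ℂ)`. Writing the
projection `E i₀ i₀` as `V * Vᴴ` with `Vᴴ * V = 1`, the blocks `E i i₀ * V` are the column blocks
of a matrix `W` with `Wᴴ * W = 1` and `π α = W * (α ⊗ₖ 1) * Wᴴ`. Unitality of `π` gives
`W * Wᴴ = 1`, so `W` is square, which forces `m = n * k`, and `W` with its columns reindexed by
`Fin m` is the required unitary.
-/

open scoped Kronecker

namespace Matrix

variable {m n o α : Type*}

def fromColBlocks (B : o → Matrix m n α) : Matrix m (o × n) α :=
  of fun x p => B p.1 x p.2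

theorem conjTranspose_fromColBlocks_mul_fromColBlocks [Fintype m] [Mul α] [AddCommMonoid α]
    [Star α] (B C : o → Matrix m n α) :
    (fromColBlocks B)ᴴ * fromColBlocks C = of fun p q => ((B p.1)ᴴ * C q.1) p.2 q.2 := by
  ext p q
  simp [fromColBlocks, mul_apply]

theorem fromColBlocks_mul_kronecker_one_mul_conjTranspose [Fintype n] [Fintype o] [DecidableEq n]
    [CommSemiring α] [Star α] (B C : o → Matrix m n α) (A : Matrix o o α) :
    fromColBlocks B * (A ⊗ₖ (1 : Matrix n n α)) * (fromColBlocks C)ᴴ =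
      ∑ i, ∑ j, A i j • (B i * (C j)ᴴ) := by
  ext x y
  simp only [fromColBlocks, mul_apply, of_apply, kroneckerMap_apply, one_apply, mul_ite, mul_one,
    mul_zero, Fintype.sum_prod_type, Finset.sum_ite_eq', Finset.mem_univ, ↓reduceIte,
    conjTranspose_apply, Finset.sum_mul, sum_apply, smul_apply, smul_eq_mul, Finset.mul_sum]
  refine (Finset.sum_congr rfl fun j _ => Finset.sum_comm).trans (Finset.sum_comm.trans ?_)
  exact Finset.sum_congr rfl fun i _ => Finset.sum_congr rfl fun j _ =>
    Finset.sum_congr rfl fun s _ => by ring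

theorem isStarProjection_single_one [Fintype n] [DecidableEq n] [Semiring α] [StarRing α]
    (i : n) : IsStarProjection (single i i (1 : α)) :=
  ⟨by simp [IsIdempotentElem], by simp [IsSelfAdjoint, star_eq_conjTranspose]⟩

theorem exists_eq_mul_conjTranspose_of_isStarProjection {𝕜 : Type*} [RCLike 𝕜] [Fintype m]
    [DecidableEq m] {P : Matrix m m 𝕜} (hP : IsStarProjection P) :
    ∃ (k : ℕ) (V : Matrix m (Fin k) 𝕜), Vᴴ * V = 1 ∧ V * Vᴴ = P := by
  obtain ⟨_, hP_range⟩ := isStarProjection_iff_eq_starProjection_range.mp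
    (hP.map (toEuclideanCLM (n := m) (𝕜 := 𝕜)))
  let b := stdOrthonormalBasis 𝕜 (toEuclideanCLM (n := m) (𝕜 := 𝕜) P).range
  refine ⟨_, of fun x s => (b s : EuclideanSpace 𝕜 m) x, ?_, ?_⟩
  · ext s t
    simpa [mul_apply, EuclideanSpace.inner_eq_star_dotProduct, dotProduct, one_apply, mul_comm]
      using orthonormal_iff_ite.mp b.orthonormal s t
  · refine EquivLike.injective (toEuclideanCLM (n := m) (𝕜 := 𝕜)) ?_
    refine Eq.trans ?_ (hP_range.trans b.starProjection_eq_sum_rankOne).symm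
    ext x i
    simp only [ofLp_toEuclideanCLM, mulVec, dotProduct, mul_apply, of_apply, conjTranspose_apply,
      RCLike.star_def, mul_comm, Finset.mul_sum, _root_.sum_apply, InnerProductSpace.rankOne_apply,
      EuclideanSpace.inner_eq_star_dotProduct, Pi.star_apply, WithLp.ofLp_sum, WithLp.ofLp_smul,
      Finset.sum_apply, Pi.smul_apply, smul_eq_mul, mul_left_comm]
    exact Finset.sum_comm

theorem submatrix_mem_unitaryGroup_of_conjTranspose_mul_self {ι : Type*} [Fintype m]
    [DecidableEq m] [Fintype ι] [DecidableEq ι] [CommRing α] [StarRing α] {W : Matrix m ι α}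
    (hW : Wᴴ * W = 1) (c : ι ≃ m) : W.submatrix id c.symm ∈ unitaryGroup m α := by
  rw [mem_unitaryGroup_iff', star_eq_conjTranspose, conjTranspose_submatrix,
    ← submatrix_mul _ _ _ _ _ Function.bijective_id, hW, submatrix_one_equiv]

theorem submatrix_mul_reindex_mul_conjTranspose {ι : Type*} [Fintype m] [Fintype ι] [Mul α]
    [AddCommMonoid α] [Star α] (W : Matrix m ι α) (c : ι ≃ m) (A : Matrix ι ι α) :
    W.submatrix id c.symm * reindex c c A * (W.submatrix id c.symm)ᴴ = W * A * Wᴴ := by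
  rw [reindex_apply, submatrix_mul_equiv, conjTranspose_submatrix, submatrix_mul_equiv,
    submatrix_id_id]

end Matrix

open Matrix

theorem StarAlgHom.exists_eq_conj_kronecker_one {𝕜 m n : Type*} [RCLike 𝕜] [Fintype m]
    [DecidableEq m] [Fintype n] [DecidableEq n] [Nonempty n]
    (π : Matrix n n 𝕜 →⋆ₐ[𝕜] Matrix m m 𝕜) :
    ∃ (k : ℕ) (W : Matrix m (n × Fin k) 𝕜),
      Wᴴ * W = 1 ∧ ∀ A, π A = W * (A ⊗ₖ (1 : Matrix (Fin k) (Fin k) 𝕜)) * Wᴴ := by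
  obtain ⟨i₀⟩ := ‹Nonempty n›
  obtain ⟨k, V, hVV, hVP⟩ := exists_eq_mul_conjTranspose_of_isStarProjection
    ((isStarProjection_single_one i₀).map π)
  set E : n → n → Matrix m m 𝕜 := fun i j => π (single i j 1)
  have hE_mul : ∀ i j l, E i j * E j l = E i l := fun i j l => by
    simp [E, ← map_mul]
  have hE_mul_ne : ∀ i j j' l, j ≠ j' → E i j * E j' l = 0 := fun i j j' l h => by
    simp [E, ← map_mul, h]
  have hE_star : ∀ i j, (E i j)ᴴ = E j i := fun i j => by
    rw [← star_eq_conjTranspose, ← map_star, star_eq_conjTranspose, conjTranspose_single, star_one]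
  replace hVP : V * Vᴴ = E i₀ i₀ := hVP
  have hgram : ∀ i j, (E i i₀ * V)ᴴ * (E j i₀ * V) = if i = j then 1 else 0 := fun i j => by
    rw [conjTranspose_mul, hE_star, Matrix.mul_assoc, ← Matrix.mul_assoc (E i₀ i)]
    split_ifs with h
    · rw [h, hE_mul, ← hVP, Matrix.mul_assoc, ← Matrix.mul_assoc, hVV, Matrix.one_mul]
    · rw [hE_mul_ne _ _ _ _ h, Matrix.zero_mul, Matrix.mul_zero]
  have hunits : ∀ i j, (E i i₀ * V) * (E j i₀ * V)ᴴ = E i j := fun i j => by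
    rw [conjTranspose_mul, hE_star, Matrix.mul_assoc, ← Matrix.mul_assoc V, hVP,
      ← Matrix.mul_assoc, hE_mul, hE_mul]
  refine ⟨k, fromColBlocks fun i => E i i₀ * V, ?_, fun A => ?_⟩
  · rw [conjTranspose_fromColBlocks_mul_fromColBlocks]
    simp_rw [hgram]
    ext ⟨i, s⟩ ⟨j, t⟩
    by_cases h : i = j <;> simp [one_apply, h]
  · rw [fromColBlocks_mul_kronecker_one_mul_conjTranspose]
    simp_rw [hunits, E, ← map_smul, smul_single, smul_eq_mul, mul_one, ← map_sum,
      ← matrix_eq_sum_single]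

open Matrix in
theorem star_algHom_matrix_eq_copies_of_identity_general
    (n m : ℕ) (hn : 1 ≤ n)
    (π : Matrix (Fin n) (Fin n) ℂ →ₐ[ℂ] Matrix (Fin m) (Fin m) ℂ)
    (hstar : ∀ α : Matrix (Fin n) (Fin n) ℂ, π αᴴ = (π α)ᴴ) :
    n ∣ m ∧
    ∃ U ∈ Matrix.unitaryGroup (Fin m) ℂ,
      ∃ e : Fin (m / n) × Fin n ≃ Fin m,
        ∀ α : Matrix (Fin n) (Fin n) ℂ,
          π α = U * (Matrix.reindex ((Equiv.prodComm (Fin n) (Fin (m / n))).trans e)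
              ((Equiv.prodComm (Fin n) (Fin (m / n))).trans e)
              (Matrix.blockDiagonal fun _ : Fin (m / n) => α)) * Uᴴ := by
  have : Nonempty (Fin n) := ⟨⟨0, hn⟩⟩
  obtain ⟨k, W, hW, hπ⟩ := StarAlgHom.exists_eq_conj_kronecker_one { π with map_star' := hstar }
  have hW' : W * Wᴴ = 1 := by simpa using (hπ 1).symm
  have hm : m = n * k := by simpa using W.square_of_invertible _ hW' hW
  obtain rfl : k = m / n := by rw [hm, Nat.mul_div_cancel_left _ hn]
  let e : Fin (m / n) × Fin n ≃ Fin m :=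
    (Equiv.prodComm _ _).trans (finProdFinEquiv.trans (finCongr hm.symm))
  refine ⟨Dvd.intro _ hm.symm, _,
    submatrix_mem_unitaryGroup_of_conjTranspose_mul_self hW ((Equiv.prodComm _ _).trans e), e,
    fun α => ?_⟩
  rw [submatrix_mul_reindex_mul_conjTranspose, ← kronecker_one]
  exact hπ α

open Matrix in
/-- a unital `ℂ`-algebra `*`-homomorphism between complex matrix
algebras is unitarily equivalent to a direct sum of copies of the identity
representation. -/
theorem star_algHom_matrix_eq_copies_of_identity
    (n m : ℕ) (hn : 1 ≤ n) (hm : 1 ≤ m)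
    (π : Matrix (Fin n) (Fin n) ℂ →ₐ[ℂ] Matrix (Fin m) (Fin m) ℂ)
    (hstar : ∀ α : Matrix (Fin n) (Fin n) ℂ, π αᴴ = (π α)ᴴ) :
    n ∣ m ∧
    ∃ U ∈ Matrix.unitaryGroup (Fin m) ℂ,
      ∃ e : Fin (m / n) × Fin n ≃ Fin m,
        ∀ α : Matrix (Fin n) (Fin n) ℂ,
          π α = U * (Matrix.reindex ((Equiv.prodComm (Fin n) (Fin (m / n))).trans e)
              ((Equiv.prodComm (Fin n) (Fin (m / n))).trans e)
              (Matrix.blockDiagonal fun _ : Fin (m / n) => α)) * Uᴴ :=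
  star_algHom_matrix_eq_copies_of_identity_general n m hn π hstar
end
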